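/- arXiv:0901.2923 — 3 statements merged into one kernel-verified Lean document; each statement's English description precedes it below -/
import Mathlib

section
/- There exists a matrix U ∈ O(12) which is a local maximizer of the 1-norm on O(12) but which does not maximize the 1-norm globally, i.e. ||U||₁ < sup_{W ∈ O(12)} ||W||₁; indeed one can take U = A ⊗ (H/2) where A = (1/3)·[[1,2,2],[2,1,−2],[−2,2,−1]] and H is any 4×4 Hadamard matrix, giving ||U||₁ = 40 < 12√12. -/
open Matrix Kronecker

/-- The 1-norm of a square matrix: the sum of the absolute values of its entries. -/
def matrixNorm1 {n : Type*} [Fintype n] (U : Matrix n n ℝ) : ℝ :=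
  ∑ i, ∑ j, |U i j|

/-- A Hadamard matrix: all entries are `±1` and the rows are pairwise orthogonal. -/
def IsHadamard {N : ℕ} (H : Matrix (Fin N) (Fin N) ℝ) : Prop :=
  (∀ i j, H i j = 1 ∨ H i j = -1) ∧
    ∀ i j, i ≠ j → ∑ k, H i k * H j k = 0

/-- The matrix `A = (1/3)·[[1,2,2],[2,1,−2],[−2,2,−1]]`. -/
noncomputable def matrixA : Matrix (Fin 3) (Fin 3) ℝ :=
  (1 / 3 : ℝ) • !![1, 2, 2; 2, 1, -2; -2, 2, -1]

/-!
Let `U ∈ O(N)` have no zero entries and sign matrix `S`. Every orthogonal `W` close to `U` has the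
same sign pattern, so `‖W‖₁ = tr (S Wᵀ) = tr (P Q)` with `P = S Uᵀ` and `Q = U Wᵀ` orthogonal. When
`P` is positive semidefinite, `tr (P Q) ≤ tr P = ‖U‖₁`, so `U` is a local maximizer. This criterion
is stable under Kronecker products and holds both for `A`, where `S Aᵀ = 1 + Bᵀ B / 3`, and for a
normalized Hadamard matrix `H / 2`; hence `A ⊗ H / 2` is a local maximizer, of 1-norm `5 · 8 = 40`.
It is not a global one: a normalized Hadamard matrix of order 12 has 1-norm `12 √12 > 40`.
-/

open Topology Filter

variable {m n : Type*}

noncomputable def signMatrix (U : Matrix m n ℝ) : Matrix m n ℝ :=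
  U.map fun x => (SignType.sign x : ℝ)

theorem matrixNorm1_eq_trace_signMatrix_mul_transpose [Fintype n] (U : Matrix n n ℝ) :
    matrixNorm1 U = trace (signMatrix U * Uᵀ) := by
  simp [matrixNorm1, signMatrix, trace, mul_apply]

theorem signMatrix_kronecker (U : Matrix m m ℝ) (V : Matrix n n ℝ) :
    signMatrix (U ⊗ₖ V) = signMatrix U ⊗ₖ signMatrix V := by
  ext
  simp [signMatrix, sign_mul]

theorem matrixNorm1_kronecker [Fintype m] [Fintype n] (U : Matrix m m ℝ) (V : Matrix n n ℝ) :
    matrixNorm1 (U ⊗ₖ V) = matrixNorm1 U * matrixNorm1 V := by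
  simp only [matrixNorm1, kroneckerMap_apply, abs_mul, Fintype.sum_prod_type,
    Finset.sum_mul_sum]

theorem kronecker_mul_transpose_kronecker [Fintype m] [Fintype n] (A C : Matrix m m ℝ)
    (B D : Matrix n n ℝ) : (A ⊗ₖ B) * (C ⊗ₖ D)ᵀ = (A * Cᵀ) ⊗ₖ (B * Dᵀ) := by
  rw [← kroneckerMap_transpose, mul_kronecker_mul]

theorem trace_mul_le_trace_of_posSemidef [Fintype n] [DecidableEq n] {P Q : Matrix n n ℝ}
    (hP : P.PosSemidef) (hQ : Q * Qᵀ = 1) : trace (P * Q) ≤ trace P := by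
  open scoped MatrixOrder in
  obtain ⟨B, rfl⟩ := CStarAlgebra.nonneg_iff_eq_star_mul_self.mp hP.nonneg
  rw [star_eq_conjTranspose, conjTranspose_eq_transpose_of_trivial]
  have hsq : 0 ≤ trace ((B * Q - B) * (B * Q - B)ᵀ) := by
    simpa using (posSemidef_self_mul_conjTranspose (B * Q - B)).trace_nonneg
  -- for `P = Bᵀ B`, `2 (tr P - tr (P Q))` is the squared Frobenius norm of `B Q - B`
  have hfrobenius :
      trace ((B * Q - B) * (B * Q - B)ᵀ) = 2 * trace (Bᵀ * B) - 2 * trace (Bᵀ * B * Q) := by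
    have h1 : trace (B * Q * Bᵀ) = trace (Bᵀ * B * Q) := by
      rw [trace_mul_comm, Matrix.mul_assoc]
    have h2 : trace (B * (Qᵀ * Bᵀ)) = trace (B * Q * Bᵀ) := by
      rw [← Matrix.mul_assoc, ← trace_transpose]; simp [Matrix.mul_assoc]
    have h3 : trace (B * Bᵀ) = trace (Bᵀ * B) := trace_mul_comm _ _
    simp only [transpose_sub, transpose_mul, sub_mul, mul_sub, trace_sub]
    rw [Matrix.mul_assoc, ← Matrix.mul_assoc Q, hQ, Matrix.one_mul]
    linarith [h1, h2, h3]
  linarith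

theorem eventually_signMatrix_eq [Fintype m] [Fintype n] {U : Matrix m n ℝ}
    (hU : ∀ i j, U i j ≠ 0) :
    ∀ᶠ W in 𝓝 U, signMatrix W = signMatrix U := by
  have hentry (i : m) (j : n) :
      ∀ᶠ W in 𝓝 U, SignType.sign (W i j) = SignType.sign (U i j) := by
    have h := (continuousAt_sign_of_ne_zero (hU i j)).comp (f := fun W : Matrix m n ℝ => W i j)
      (continuous_apply_apply i j).continuousAt
    rw [ContinuousAt, nhds_discrete SignType] at h
    exact tendsto_pure.mp h
  filter_upwards [eventually_all.mpr fun i => eventually_all.mpr (hentry i)]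
    with W hW
  ext i j
  simp [signMatrix, hW i j]

structure IsSignPosSemidefOrthogonal [Fintype n] [DecidableEq n] (U : Matrix n n ℝ) : Prop where
  mul_transpose_self : U * Uᵀ = 1
  apply_ne_zero : ∀ i j, U i j ≠ 0
  posSemidef : (signMatrix U * Uᵀ).PosSemidef

theorem IsSignPosSemidefOrthogonal.isLocalMaxOn [Fintype n] [DecidableEq n] {U : Matrix n n ℝ}
    (hU : IsSignPosSemidefOrthogonal U) :
    IsLocalMaxOn matrixNorm1 {W : Matrix n n ℝ | W * Wᵀ = 1} U := by
  filter_upwards [nhdsWithin_le_nhds (eventually_signMatrix_eq hU.apply_ne_zero),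
    self_mem_nhdsWithin] with W hsign hW
  have hUW : (U * Wᵀ) * (U * Wᵀ)ᵀ = 1 := by
    rw [transpose_mul, transpose_transpose, Matrix.mul_assoc, ← Matrix.mul_assoc Wᵀ,
      mul_eq_one_comm.mp hW, Matrix.one_mul, hU.mul_transpose_self]
  calc matrixNorm1 W = trace (signMatrix U * Uᵀ * (U * Wᵀ)) := by
        rw [matrixNorm1_eq_trace_signMatrix_mul_transpose, hsign, ← Matrix.mul_assoc,
          Matrix.mul_assoc (signMatrix U), mul_eq_one_comm.mp hU.mul_transpose_self,
          Matrix.mul_one]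
    _ ≤ trace (signMatrix U * Uᵀ) := trace_mul_le_trace_of_posSemidef hU.posSemidef hUW
    _ = matrixNorm1 U := (matrixNorm1_eq_trace_signMatrix_mul_transpose U).symm

theorem IsSignPosSemidefOrthogonal.kronecker [Fintype m] [Fintype n] [DecidableEq m]
    [DecidableEq n] {U : Matrix m m ℝ} {V : Matrix n n ℝ}
    (hU : IsSignPosSemidefOrthogonal U) (hV : IsSignPosSemidefOrthogonal V) :
    IsSignPosSemidefOrthogonal (U ⊗ₖ V) where
  mul_transpose_self := by
    rw [kronecker_mul_transpose_kronecker, hU.mul_transpose_self, hV.mul_transpose_self,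
      one_kronecker_one]
  apply_ne_zero i j := mul_ne_zero (hU.apply_ne_zero _ _) (hV.apply_ne_zero _ _)
  posSemidef := by
    rw [signMatrix_kronecker, kronecker_mul_transpose_kronecker]
    exact hU.posSemidef.kronecker hV.posSemidef

section Hadamard

variable {N : ℕ} {H : Matrix (Fin N) (Fin N) ℝ}

theorem IsHadamard.mul_transpose_self (hH : _root_.IsHadamard H) : H * Hᵀ = (N : ℝ) • 1 := by
  ext i j
  rw [mul_apply, Matrix.smul_apply, one_apply]
  by_cases hij : i = j
  · subst hij
    have hsq (k : Fin N) : H i k * H i k = 1 := by rcases hH.1 i k with h | h <;> simp [h]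
    simp [hsq]
  · simp [hij, hH.2 i j hij]

theorem IsHadamard.signMatrix_smul (hH : _root_.IsHadamard H) {c : ℝ} (hc : 0 < c) :
    signMatrix (c • H) = H := by
  ext i j
  rcases hH.1 i j with h | h <;> simp [signMatrix, h, hc]

theorem IsHadamard.matrixNorm1_smul (hH : _root_.IsHadamard H) {c : ℝ} (hc : 0 ≤ c) :
    matrixNorm1 (c • H) = c * N ^ 2 := by
  have habs (i j : Fin N) : |(c • H) i j| = c := by
    rcases hH.1 i j with h | h <;> simp [h, abs_of_nonneg hc]
  simp only [matrixNorm1, habs, Finset.sum_const, Finset.card_univ, Fintype.card_fin,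
    nsmul_eq_mul]
  ring

theorem IsHadamard.isSignPosSemidefOrthogonal_smul (hH : _root_.IsHadamard H) {c : ℝ} (hc : 0 < c)
    (hcN : c ^ 2 * N = 1) : IsSignPosSemidefOrthogonal (c • H) where
  mul_transpose_self := by
    rw [transpose_smul, smul_mul_smul_comm, hH.mul_transpose_self, smul_smul, ← sq, hcN, one_smul]
  apply_ne_zero i j := by
    rcases hH.1 i j with h | h <;> simp [h, hc.ne']
  posSemidef := by
    rw [hH.signMatrix_smul hc, transpose_smul, Matrix.mul_smul, hH.mul_transpose_self, smul_smul]
    exact PosSemidef.one.smul (by positivity)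

end Hadamard

theorem bddAbove_matrixNorm1_orthogonal [Fintype n] [DecidableEq n] :
    BddAbove {x : ℝ | ∃ W : Matrix n n ℝ, W * Wᵀ = 1 ∧ x = matrixNorm1 W} := by
  refine ⟨Fintype.card n * Fintype.card n, ?_⟩
  rintro _ ⟨W, hW, rfl⟩
  have hW' : W ∈ unitaryGroup n ℝ := by
    rwa [mem_unitaryGroup_iff, star_eq_conjTranspose, conjTranspose_eq_transpose_of_trivial]
  calc matrixNorm1 W ≤ ∑ _i : n, ∑ _j : n, (1 : ℝ) :=
        Finset.sum_le_sum fun i _ => Finset.sum_le_sum fun j _ =>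
          entry_norm_bound_of_unitary hW' i j
    _ = Fintype.card n * Fintype.card n := by simp

theorem matrixNorm1_submatrix_equiv {ι : Type*} [Fintype ι] [Fintype n] (U : Matrix n n ℝ)
    (e : ι ≃ n) : matrixNorm1 (U.submatrix e e) = matrixNorm1 U := by
  simp only [matrixNorm1, submatrix_apply]
  exact Fintype.sum_equiv e _ _ fun i => Fintype.sum_equiv e _ _ fun j => rfl

theorem exists_orthogonal_matrixNorm1_eq_of_isHadamard {ι : Type*} [Fintype ι] [DecidableEq ι]
    {N : ℕ} (hN : 0 < N) {H : Matrix (Fin N) (Fin N) ℝ} (hH : _root_.IsHadamard H)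
    (e : ι ≃ Fin N) : ∃ W : Matrix ι ι ℝ, W * Wᵀ = 1 ∧ matrixNorm1 W = N * √N := by
  have hsqrt : (0 : ℝ) < √N := Real.sqrt_pos.2 (Nat.cast_pos.2 hN)
  have hsq : √N ^ 2 = N := Real.sq_sqrt (Nat.cast_nonneg N)
  have hc : (√N)⁻¹ ^ 2 * N = 1 := by
    rw [inv_pow, hsq, inv_mul_cancel₀ (Nat.cast_ne_zero.2 hN.ne')]
  refine ⟨((√N)⁻¹ • H).submatrix e e, ?_, ?_⟩
  · rw [transpose_submatrix, submatrix_mul_equiv,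
      (hH.isSignPosSemidefOrthogonal_smul (inv_pos.2 hsqrt) hc).mul_transpose_self,
      submatrix_one_equiv]
  · rw [matrixNorm1_submatrix_equiv, hH.matrixNorm1_smul (inv_nonneg.2 hsqrt.le)]
    field_simp
    linear_combination -hsq

def sylvester4 : Matrix (Fin 4) (Fin 4) ℝ :=
  !![1, 1, 1, 1; 1, -1, 1, -1; 1, 1, -1, -1; 1, -1, -1, 1]

theorem isHadamard_sylvester4 : _root_.IsHadamard sylvester4 := by
  refine ⟨fun i j => ?_, fun i j hij => ?_⟩ <;> fin_cases i <;> fin_cases j <;>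
    simp_all [sylvester4, Fin.sum_univ_succ]

theorem matrixA_mul_transpose : matrixA * matrixAᵀ = 1 := by
  ext i j
  fin_cases i <;> fin_cases j <;> norm_num [matrixA, mul_apply, Fin.sum_univ_succ]

theorem signMatrix_matrixA : signMatrix matrixA = !![1, 1, 1; 1, 1, -1; -1, 1, -1] := by
  ext i j
  fin_cases i <;> fin_cases j <;> simp [signMatrix, matrixA]

theorem signMatrix_matrixA_mul_transpose :
    signMatrix matrixA * matrixAᵀ =
      1 + (1 / 3 : ℝ) • ((!![1, 1, 0; 1, 0, -1; 0, 1, 1] : Matrix (Fin 3) (Fin 3) ℝ)ᵀ *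
        !![1, 1, 0; 1, 0, -1; 0, 1, 1]) := by
  rw [signMatrix_matrixA]
  ext i j
  fin_cases i <;> fin_cases j <;> norm_num [matrixA, mul_apply, Fin.sum_univ_succ, one_apply]

theorem isSignPosSemidefOrthogonal_matrixA : IsSignPosSemidefOrthogonal matrixA where
  mul_transpose_self := matrixA_mul_transpose
  apply_ne_zero i j := by fin_cases i <;> fin_cases j <;> simp [matrixA]
  posSemidef := by
    rw [signMatrix_matrixA_mul_transpose, ← conjTranspose_eq_transpose_of_trivial]
    exact PosSemidef.one.add ((posSemidef_conjTranspose_mul_self _).smul (by norm_num))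

theorem matrixNorm1_matrixA : matrixNorm1 matrixA = 5 := by
  norm_num [matrixNorm1, matrixA, Fin.sum_univ_succ, abs_of_pos]

def hadamard12 : Matrix (Fin 12) (Fin 12) ℤ :=
  !![1, 1, 1, 1, 1, 1, 1, 1, 1, 1, 1, 1;
     -1, 1, -1, 1, -1, -1, -1, 1, 1, 1, -1, 1;
     -1, 1, 1, -1, 1, -1, -1, -1, 1, 1, 1, -1;
     -1, -1, 1, 1, -1, 1, -1, -1, -1, 1, 1, 1;
     -1, 1, -1, 1, 1, -1, 1, -1, -1, -1, 1, 1;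
     -1, 1, 1, -1, 1, 1, -1, 1, -1, -1, -1, 1;
     -1, 1, 1, 1, -1, 1, 1, -1, 1, -1, -1, -1;
     -1, -1, 1, 1, 1, -1, 1, 1, -1, 1, -1, -1;
     -1, -1, -1, 1, 1, 1, -1, 1, 1, -1, 1, -1;
     -1, -1, -1, -1, 1, 1, 1, -1, 1, 1, -1, 1;
     -1, 1, -1, -1, -1, 1, 1, 1, -1, 1, 1, -1;
     -1, -1, 1, -1, -1, -1, 1, 1, 1, -1, 1, 1]

theorem isHadamard_hadamard12 : _root_.IsHadamard (hadamard12.map ((↑) : ℤ → ℝ)) := by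
  obtain ⟨hsq, horth⟩ : (∀ i j, hadamard12 i j * hadamard12 i j = 1) ∧
      ∀ i j, i ≠ j → ∑ k, hadamard12 i k * hadamard12 j k = 0 := by
    decide
  refine ⟨fun i j => mul_self_eq_one_iff.mp ?_, fun i j hij => ?_⟩
  · simpa using congrArg ((↑) : ℤ → ℝ) (hsq i j)
  · simpa using congrArg ((↑) : ℤ → ℝ) (horth i j hij)

/-- There is a matrix `U ∈ O(12)` (here `12 = 3 × 4`) which locally maximizes the
1-norm but does not maximize it globally: for any `4×4` Hadamard matrix `H`, the
matrix `U = A ⊗ (H/2)` is orthogonal, locally maximizes the 1-norm on `O(12)`,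
and satisfies `‖U‖₁ = 40 < 12·√12`, so `‖U‖₁ < sup_{W ∈ O(12)} ‖W‖₁`. -/
theorem exists_local_not_global_maximizer_norm1 :
    ∃ U : Matrix (Fin 3 × Fin 4) (Fin 3 × Fin 4) ℝ,
      (∃ H : Matrix (Fin 4) (Fin 4) ℝ, _root_.IsHadamard H ∧ U = matrixA ⊗ₖ ((1 / 2 : ℝ) • H)) ∧
      U * Uᵀ = 1 ∧
      IsLocalMaxOn matrixNorm1
        {W : Matrix (Fin 3 × Fin 4) (Fin 3 × Fin 4) ℝ | W * Wᵀ = 1} U ∧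
      matrixNorm1 U = 40 ∧
      (40 : ℝ) < 12 * Real.sqrt 12 ∧
      matrixNorm1 U <
        sSup {x : ℝ | ∃ W : Matrix (Fin 3 × Fin 4) (Fin 3 × Fin 4) ℝ,
          W * Wᵀ = 1 ∧ x = matrixNorm1 W} := by
  have hU := isSignPosSemidefOrthogonal_matrixA.kronecker
    (isHadamard_sylvester4.isSignPosSemidefOrthogonal_smul (c := 1 / 2) (by norm_num) (by norm_num))
  have hnorm : matrixNorm1 (matrixA ⊗ₖ ((1 / 2 : ℝ) • sylvester4)) = 40 := by
    rw [matrixNorm1_kronecker, matrixNorm1_matrixA,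
      isHadamard_sylvester4.matrixNorm1_smul (by norm_num)]
    norm_num
  have hlt : (40 : ℝ) < 12 * √12 := by
    nlinarith [Real.sq_sqrt (show (0 : ℝ) ≤ 12 by norm_num), Real.sqrt_nonneg 12]
  obtain ⟨W, hW, hWnorm⟩ := exists_orthogonal_matrixNorm1_eq_of_isHadamard (by norm_num)
    isHadamard_hadamard12 (finProdFinEquiv : Fin 3 × Fin 4 ≃ Fin 12)
  refine ⟨_, ⟨sylvester4, isHadamard_sylvester4, rfl⟩, hU.mul_transpose_self, hU.isLocalMaxOn,
    hnorm, hlt, ?_⟩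
  calc _ = (40 : ℝ) := hnorm
    _ < 12 * √12 := hlt
    _ = matrixNorm1 W := by rw [hWnorm]; norm_num
    _ ≤ _ := le_csSup bddAbove_matrixNorm1_orthogonal ⟨W, hW, rfl⟩
end

section
/- Let N be even. If there exists U ∈ O(N) with ||U||₁ > N√N − 1/(N√N), then there exists a Hadamard matrix of order N. -/
/-!
Let `uᵢ` be the rows of `U` and `sᵢ ∈ {±1}ᴺ` their sign vectors, and put `r = √N`. Then
`⟪sᵢ, uᵢ⟫ = ‖uᵢ‖₁ ≤ r` and `‖sᵢ - r uᵢ‖² = 2r (r - ‖uᵢ‖₁)`, so the hypothesis says that every `sᵢ`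
is very close to `r uᵢ`: the deficits `r - ‖uᵢ‖₁` are nonnegative and sum to less than
`1 / (N r)`. As `uᵢ ⊥ uⱼ`, this forces `⟪sᵢ, sⱼ⟫² < 4`. But `⟪sᵢ, sⱼ⟫` is a sum of `N` terms `±1`
with `N` even, hence an even integer, so it vanishes and the sign matrix of `U` is Hadamard.
-/

open Matrix

open scoped InnerProductSpace

section InnerProductSpace

variable {E : Type*} [NormedAddCommGroup E] [InnerProductSpace ℝ E]

lemma abs_real_inner_le_of_inner_eq_zero {x y e f : E} {r : ℝ} (hx : ‖x‖ ≤ r) (hf : ‖f‖ ≤ 1)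
    (hef : ⟪e, f⟫_ℝ = 0) : |⟪x, y⟫_ℝ| ≤ r * (‖x - r • e‖ + ‖y - r • f‖) := by
  have hr : 0 ≤ r := (norm_nonneg x).trans hx
  have hsplit : ⟪x, y⟫_ℝ = ⟪x, y - r • f⟫_ℝ + r * ⟪x - r • e, f⟫_ℝ := by
    simp only [inner_sub_left, inner_sub_right, inner_smul_left, inner_smul_right, hef,
      RCLike.conj_to_real]
    ring
  have h₁ : |⟪x, y - r • f⟫_ℝ| ≤ r * ‖y - r • f‖ :=
    (abs_real_inner_le_norm _ _).trans (by gcongr)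
  have h₂ : |r * ⟪x - r • e, f⟫_ℝ| ≤ r * ‖x - r • e‖ := by
    rw [abs_mul, abs_of_nonneg hr]
    gcongr
    exact (abs_real_inner_le_norm _ _).trans (mul_le_of_le_one_right (norm_nonneg _) hf)
  rw [hsplit]
  linarith [abs_add_le ⟪x, y - r • f⟫_ℝ (r * ⟪x - r • e, f⟫_ℝ)]

lemma norm_sub_smul_sq_of_norm_eq {x e : E} {r : ℝ} (hx : ‖x‖ = r) (he : ‖e‖ = 1) :
    ‖x - r • e‖ ^ 2 = 2 * r * (r - ⟪x, e⟫_ℝ) := by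
  rw [norm_sub_sq_real, inner_smul_right, norm_smul, hx, he, mul_one, Real.norm_eq_abs, sq_abs]
  ring

lemma real_inner_sq_le_of_inner_eq_zero {x y e f : E} {r : ℝ} (hx : ‖x‖ = r) (hy : ‖y‖ = r)
    (he : ‖e‖ = 1) (hf : ‖f‖ = 1) (hef : ⟪e, f⟫_ℝ = 0) :
    ⟪x, y⟫_ℝ ^ 2 ≤ 4 * r ^ 3 * ((r - ⟪x, e⟫_ℝ) + (r - ⟪y, f⟫_ℝ)) := by
  set a := ‖x - r • e‖
  set b := ‖y - r • f‖
  have hG : |⟪x, y⟫_ℝ| ≤ r * (a + b) := abs_real_inner_le_of_inner_eq_zero hx.le hf.le hef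
  calc ⟪x, y⟫_ℝ ^ 2 = |⟪x, y⟫_ℝ| ^ 2 := (sq_abs _).symm
    _ ≤ (r * (a + b)) ^ 2 := by gcongr
    _ ≤ r ^ 2 * (2 * (a ^ 2 + b ^ 2)) := by
      rw [mul_pow]
      gcongr
      linarith [sq_nonneg (a - b)]
    _ = 4 * r ^ 3 * ((r - ⟪x, e⟫_ℝ) + (r - ⟪y, f⟫_ℝ)) := by
      rw [norm_sub_smul_sq_of_norm_eq hx he, norm_sub_smul_sq_of_norm_eq hy hf]
      ring

end InnerProductSpace

section SignVector

variable {ι : Type*}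

/-- The sign pattern of `v`, with the sign of `0` taken to be `1` so that every entry is `±1`. -/
noncomputable def signVec (v : ι → ℝ) : ι → ℝ := fun k => if 0 ≤ v k then 1 else -1

lemma signVec_eq_one_or_neg_one (v : ι → ℝ) (k : ι) : signVec v k = 1 ∨ signVec v k = -1 := by
  unfold signVec
  split_ifs <;> simp

lemma signVec_mul_self (v : ι → ℝ) (k : ι) : signVec v k * v k = |v k| := by
  unfold signVec
  split_ifs with h
  · rw [one_mul, abs_of_nonneg h]
  · rw [neg_one_mul, abs_of_neg (not_le.mp h)]

lemma signVec_dotProduct_self [Fintype ι] (v : ι → ℝ) : signVec v ⬝ᵥ v = ∑ k, |v k| :=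
  Finset.sum_congr rfl fun k _ => signVec_mul_self v k

lemma signVec_dotProduct_signVec_self [Fintype ι] (v : ι → ℝ) :
    signVec v ⬝ᵥ signVec v = Fintype.card ι := by
  have h : ∀ k, signVec v k * signVec v k = 1 := fun k => by
    rcases signVec_eq_one_or_neg_one v k with h | h <;> norm_num [h]
  simp [dotProduct, h]

lemma norm_toLp_signVec [Fintype ι] (v : ι → ℝ) :
    ‖WithLp.toLp 2 (signVec v)‖ = √(Fintype.card ι) := by
  rw [← Real.sqrt_sq (norm_nonneg _), ← real_inner_self_eq_norm_sq,
    EuclideanSpace.inner_toLp_toLp, star_trivial, signVec_dotProduct_signVec_self]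

lemma exists_int_sum_eq_two_mul [Fintype ι] {f : ι → ℝ} (hf : ∀ k, f k = 1 ∨ f k = -1)
    (hcard : Even (Fintype.card ι)) : ∃ z : ℤ, ∑ k, f k = 2 * z := by
  obtain ⟨n, hn⟩ := hcard
  have hshift : ∀ k, f k + 1 = 2 * if f k = 1 then 1 else 0 := fun k => by
    rcases hf k with h | h <;> norm_num [h]
  have hsum : ∑ k, f k + Fintype.card ι = 2 * (Finset.univ.filter fun k => f k = 1).card := by
    rw [Finset.card_univ.symm, Finset.cast_card, ← Finset.sum_add_distrib,
      Finset.sum_congr rfl fun k _ => hshift k, ← Finset.mul_sum, Finset.sum_boole]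
  refine ⟨(Finset.univ.filter fun k => f k = 1).card - n, ?_⟩
  push_cast
  rw [hn] at hsum
  push_cast at hsum
  linarith

lemma exists_int_signVec_dotProduct_eq_two_mul [Fintype ι] (hcard : Even (Fintype.card ι))
    (v w : ι → ℝ) : ∃ z : ℤ, signVec v ⬝ᵥ signVec w = 2 * z := by
  refine exists_int_sum_eq_two_mul (fun k => ?_) hcard
  rcases signVec_eq_one_or_neg_one v k with h | h <;>
    rcases signVec_eq_one_or_neg_one w k with h' | h' <;> norm_num [h, h']

end SignVector

section OrthonormalRows

variable {ι : Type*} [Fintype ι]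

lemma real_inner_toLp_toLp (v w : ι → ℝ) : ⟪WithLp.toLp 2 v, WithLp.toLp 2 w⟫_ℝ = v ⬝ᵥ w := by
  rw [EuclideanSpace.inner_toLp_toLp, star_trivial, dotProduct_comm]

lemma orthonormal_toLp_rows [DecidableEq ι] {U : Matrix ι ι ℝ} (hU : U * Uᵀ = 1) :
    Orthonormal ℝ fun i => WithLp.toLp 2 (U i) := by
  rw [orthonormal_iff_ite]
  intro i j
  rw [real_inner_toLp_toLp, ← one_apply, ← hU, mul_apply]
  rfl

lemma sum_abs_le_sqrt_card {v : ι → ℝ} (hv : ‖WithLp.toLp 2 v‖ = 1) :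
    ∑ k, |v k| ≤ √(Fintype.card ι) := by
  simpa [real_inner_toLp_toLp, signVec_dotProduct_self, norm_toLp_signVec, hv] using
    real_inner_le_norm (WithLp.toLp 2 (signVec v)) (WithLp.toLp 2 v)

lemma signVec_dotProduct_sq_le {U : Matrix ι ι ℝ}
    (hU : Orthonormal ℝ fun i => WithLp.toLp 2 (U i)) {i j : ι} (hij : i ≠ j) :
    (signVec (U i) ⬝ᵥ signVec (U j)) ^ 2 ≤ 4 * √(Fintype.card ι) ^ 3 *
      ((√(Fintype.card ι) - ∑ k, |U i k|) + (√(Fintype.card ι) - ∑ k, |U j k|)) := by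
  simpa only [real_inner_toLp_toLp, signVec_dotProduct_self] using
    real_inner_sq_le_of_inner_eq_zero (norm_toLp_signVec (U i)) (norm_toLp_signVec (U j))
      (hU.1 i) (hU.1 j) (hU.2 hij)

lemma signVec_dotProduct_sq_lt_four {U : Matrix ι ι ℝ}
    (hU : Orthonormal ℝ fun i => WithLp.toLp 2 (U i))
    (hnorm : Fintype.card ι * √(Fintype.card ι) - 1 / (Fintype.card ι * √(Fintype.card ι)) <
      ∑ i, ∑ j, |U i j|)
    {i j : ι} (hij : i ≠ j) : (signVec (U i) ⬝ᵥ signVec (U j)) ^ 2 < 4 := by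
  classical
  set N : ℝ := (Fintype.card ι : ℝ)
  set r := √N
  have hN : 0 < N := by simpa [N] using Fintype.card_pos_iff.mpr ⟨i⟩
  have hr : 0 < r := Real.sqrt_pos.mpr hN
  set δ : ι → ℝ := fun p => r - ∑ k, |U p k|
  have hδ : ∀ p, 0 ≤ δ p := fun p => sub_nonneg.mpr (sum_abs_le_sqrt_card (hU.1 p))
  have hpair : δ i + δ j < 1 / (N * r) :=
    calc δ i + δ j = ∑ p ∈ {i, j}, δ p := (Finset.sum_pair hij).symm
      _ ≤ ∑ p, δ p := Finset.sum_le_sum_of_subset_of_nonneg (Finset.subset_univ _)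
          fun p _ _ => hδ p
      _ = N * r - ∑ p, ∑ k, |U p k| := by simp [δ, Finset.sum_sub_distrib, N]
      _ < 1 / (N * r) := by linarith
  calc (signVec (U i) ⬝ᵥ signVec (U j)) ^ 2 ≤ 4 * r ^ 3 * (δ i + δ j) :=
        signVec_dotProduct_sq_le hU hij
    _ < 4 * r ^ 3 * (1 / (N * r)) := by gcongr
    _ = 4 := by
      have hr2 : r ^ 2 = N := Real.sq_sqrt hN.le
      field_simp
      rw [hr2]

end OrthonormalRows

/-- Let `N` be even. If some `U ∈ O(N)` satisfies `‖U‖₁ > N√N − 1/(N√N)`, then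
there exists a Hadamard matrix of order `N`. -/
theorem exists_hadamard_of_norm1_gt {N : ℕ} (hN : Even N)
    (hex : ∃ U : Matrix (Fin N) (Fin N) ℝ, U * Uᵀ = 1 ∧
      (N : ℝ) * Real.sqrt N - 1 / ((N : ℝ) * Real.sqrt N) < ∑ i, ∑ j, |U i j|) :
    ∃ H : Matrix (Fin N) (Fin N) ℝ, _root_.IsHadamard H := by
  obtain ⟨U, hU, hnorm⟩ := hex
  refine ⟨of fun i => signVec (U i), fun i j => signVec_eq_one_or_neg_one _ _, fun i j hij => ?_⟩
  obtain ⟨z, hz⟩ := exists_int_signVec_dotProduct_eq_two_mul (by simpa using hN) (U i) (U j)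
  have hlt := signVec_dotProduct_sq_lt_four (orthonormal_toLp_rows hU) (by simpa using hnorm) hij
  rw [hz] at hlt
  have hz0 : z = 0 := by
    have hz1 : z ^ 2 < 1 := by exact_mod_cast (by nlinarith : (z : ℝ) ^ 2 < 1)
    exact Int.abs_lt_one_iff.mp ((sq_lt_one_iff_abs_lt_one z).mp hz1)
  change signVec (U i) ⬝ᵥ signVec (U j) = 0
  simp [hz, hz0]
end

section
/- Let 1 ≤ p < 2 and U ∈ O(N). Then the p-norm satisfies ||U||_p ≤ N^{2/p − 1/2}, with equality if and only if |U_{ij}| = 1/√N for all i,j (i.e., if and only if √N·U is a Hadamard matrix). -/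
/-!
With `q = p / 2 < 1` we have `|Uᵢⱼ|^p = (Uᵢⱼ²)^q`, and the `N²` numbers `Uᵢⱼ²` sum to
`tr (U Uᵀ) = N`. Jensen's inequality for the strictly concave `t ↦ t^q` bounds `∑ (Uᵢⱼ²)^q` by
`N² (1/N)^q = N^(2 - q)`, with equality exactly when every `Uᵢⱼ²` equals the mean `1/N`;
the `p`-th root of `N^(2 - q)` is `N^(2/p - 1/2)`. Since the rows of `U` are orthogonal, so are
those of `√N • U`, which is therefore Hadamard exactly when all `|Uᵢⱼ| = 1/√N`.
-/

open Matrix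

open Finset

section PowerMean

variable {ι : Type*} [Fintype ι] {x : ι → ℝ} {c q : ℝ}

theorem sum_rpow_le_card_mul_rpow (hq0 : 0 ≤ q) (hq1 : q ≤ 1) (hx : ∀ i, 0 ≤ x i)
    (hs : ∑ i, x i = Fintype.card ι * c) :
    ∑ i, x i ^ q ≤ Fintype.card ι * c ^ q := by
  cases isEmpty_or_nonempty ι
  · simp
  have hn : (0 : ℝ) < Fintype.card ι := by exact_mod_cast Fintype.card_pos
  have h := (Real.concaveOn_rpow hq0 hq1).le_map_sum (t := univ)
    (w := fun _ => (Fintype.card ι : ℝ)⁻¹) (p := x) (fun _ _ => by positivity)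
    (by simp [hn.ne']) (fun i _ => Set.mem_Ici.mpr (hx i))
  simp only [smul_eq_mul, ← mul_sum, hs, inv_mul_cancel_left₀ hn.ne'] at h
  rwa [inv_mul_le_iff₀ hn] at h

theorem sum_rpow_eq_card_mul_rpow_iff (hq0 : 0 < q) (hq1 : q < 1) (hx : ∀ i, 0 ≤ x i)
    (hs : ∑ i, x i = Fintype.card ι * c) :
    ∑ i, x i ^ q = Fintype.card ι * c ^ q ↔ ∀ i, x i = c := by
  cases isEmpty_or_nonempty ι
  · simp
  have hn : (0 : ℝ) < Fintype.card ι := by exact_mod_cast Fintype.card_pos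
  have h := (Real.strictConcaveOn_rpow hq0 hq1).map_sum_eq_iff_of_pos (t := univ)
    (w := fun _ => (Fintype.card ι : ℝ)⁻¹) (p := x) (fun _ _ => by positivity)
    (by simp [hn.ne']) (fun i _ => Set.mem_Ici.mpr (hx i))
  simp only [smul_eq_mul, ← mul_sum, hs, inv_mul_cancel_left₀ hn.ne', mem_univ,
    forall_const] at h
  rw [eq_comm, inv_mul_eq_iff_eq_mul₀ hn.ne'] at h
  rw [h]
  refine ⟨fun hconst i => mul_left_cancel₀ hn.ne' ?_, fun hc j k => by rw [hc j, hc k]⟩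
  rw [← hs]
  simp [fun j => @hconst j i]

end PowerMean

theorem Real.abs_rpow_eq_sq_rpow_half (x p : ℝ) : |x| ^ p = (x ^ 2) ^ (p / 2) := by
  rw [← sq_abs, ← Real.rpow_natCast, ← Real.rpow_mul (abs_nonneg x)]
  congr 1
  push_cast
  ring

theorem Real.sq_eq_inv_iff_abs_eq_one_div_sqrt {a : ℝ} (ha : 0 ≤ a) (x : ℝ) :
    x ^ 2 = a⁻¹ ↔ |x| = 1 / √a := by
  rw [one_div, ← Real.sqrt_inv, eq_comm (a := |x|),
    Real.sqrt_eq_iff_eq_sq (inv_nonneg.mpr ha) (abs_nonneg x), sq_abs, eq_comm]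

theorem Real.mul_self_mul_inv_rpow {a : ℝ} (ha : 0 ≤ a) {q : ℝ} (hq : q ≠ 2) :
    a * a * a⁻¹ ^ q = a ^ (2 - q) := by
  rcases ha.eq_or_lt with rfl | ha
  · rw [Real.zero_rpow (sub_ne_zero.mpr hq.symm)]
    simp
  rw [Real.inv_rpow ha.le, Real.rpow_sub ha, Real.rpow_two, sq, div_eq_mul_inv]

theorem isHadamard_smul_iff {N : ℕ} {U : Matrix (Fin N) (Fin N) ℝ} (hU : (U * Uᵀ).IsDiag)
    {a : ℝ} (ha : a ≠ 0) :
    _root_.IsHadamard (a • U) ↔ ∀ i j, |U i j| = 1 / |a| := by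
  have horth : ∀ i j, i ≠ j → ∑ k, (a • U) i k * (a • U) j k = 0 := fun i j hij => by
    have h : ∑ k, U i k * U j k = 0 := by simpa [mul_apply] using hU hij
    simp only [Matrix.smul_apply, smul_eq_mul]
    rw [← mul_zero (a * a), ← h, mul_sum]
    exact sum_congr rfl fun k _ => by ring
  rw [_root_.IsHadamard, and_iff_left horth]
  refine forall₂_congr fun i j => ?_
  rw [← abs_eq zero_le_one, Matrix.smul_apply, smul_eq_mul, abs_mul,
    eq_div_iff (abs_ne_zero.mpr ha), mul_comm]

namespace Matrix

theorem sum_sum_abs_rpow_eq_sum_sq_rpow {n : Type*} [Fintype n] (U : Matrix n n ℝ) (p : ℝ) :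
    ∑ i, ∑ j, |U i j| ^ p = ∑ ij : n × n, (U ij.1 ij.2 ^ 2) ^ (p / 2) := by
  simp only [Real.abs_rpow_eq_sq_rpow_half]
  exact (Fintype.sum_prod_type' fun i j => (U i j ^ 2) ^ (p / 2)).symm

variable {n : Type*} [Fintype n] [DecidableEq n] {U : Matrix n n ℝ}

theorem sum_sum_sq_eq_card_of_mul_transpose_eq_one (hU : U * Uᵀ = 1) :
    ∑ i, ∑ j, U i j ^ 2 = Fintype.card n := by
  simpa [trace, mul_apply, sq] using congrArg trace hU

theorem sum_sq_eq_card_mul_inv_of_mul_transpose_eq_one (hU : U * Uᵀ = 1) :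
    ∑ ij : n × n, U ij.1 ij.2 ^ 2 = Fintype.card (n × n) * (Fintype.card n : ℝ)⁻¹ := by
  rw [Fintype.card_prod, Nat.cast_mul, mul_self_mul_inv,
    ← sum_sum_sq_eq_card_of_mul_transpose_eq_one hU]
  exact Fintype.sum_prod_type' fun i j => U i j ^ 2

theorem sum_sum_abs_rpow_le_of_mul_transpose_eq_one (hU : U * Uᵀ = 1) {p : ℝ} (hp0 : 0 ≤ p)
    (hp2 : p ≤ 2) :
    ∑ i, ∑ j, |U i j| ^ p ≤ (Fintype.card n : ℝ) ^ (2 - p / 2) := by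
  rw [sum_sum_abs_rpow_eq_sum_sq_rpow, ← Real.mul_self_mul_inv_rpow (Nat.cast_nonneg _)
    (by linarith), ← Nat.cast_mul, ← Fintype.card_prod]
  exact sum_rpow_le_card_mul_rpow (by linarith) (by linarith) (fun _ => sq_nonneg _)
    (sum_sq_eq_card_mul_inv_of_mul_transpose_eq_one hU)

theorem sum_sum_abs_rpow_eq_iff_of_mul_transpose_eq_one (hU : U * Uᵀ = 1) {p : ℝ}
    (hp0 : 0 < p) (hp2 : p < 2) :
    ∑ i, ∑ j, |U i j| ^ p = (Fintype.card n : ℝ) ^ (2 - p / 2) ↔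
      ∀ i j, U i j ^ 2 = (Fintype.card n : ℝ)⁻¹ := by
  rw [sum_sum_abs_rpow_eq_sum_sq_rpow, ← Real.mul_self_mul_inv_rpow (Nat.cast_nonneg _)
    (by linarith), ← Nat.cast_mul, ← Fintype.card_prod]
  exact (sum_rpow_eq_card_mul_rpow_iff (by linarith) (by linarith) (fun _ => sq_nonneg _)
    (sum_sq_eq_card_mul_inv_of_mul_transpose_eq_one hU)).trans Prod.forall

end Matrix

/-- For `1 ≤ p < 2` and `U ∈ O(N)`, the `p`-norm satisfies `‖U‖_p ≤ N^{2/p − 1/2}`,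
with equality iff `|Uᵢⱼ| = 1/√N` for all `i, j`, iff `√N·U` is a Hadamard matrix. -/
theorem pnorm_le_of_orthogonal (N : ℕ) (p : ℝ) (hp1 : 1 ≤ p) (hp2 : p < 2)
    (U : Matrix (Fin N) (Fin N) ℝ) (hU : U * Uᵀ = 1) :
    (∑ i, ∑ j, |U i j| ^ p) ^ (1 / p) ≤ (N : ℝ) ^ (2 / p - 1 / 2) ∧
    ((∑ i, ∑ j, |U i j| ^ p) ^ (1 / p) = (N : ℝ) ^ (2 / p - 1 / 2) ↔
      ∀ i j, |U i j| = 1 / Real.sqrt N) ∧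
    ((∑ i, ∑ j, |U i j| ^ p) ^ (1 / p) = (N : ℝ) ^ (2 / p - 1 / 2) ↔
      _root_.IsHadamard (Real.sqrt N • U)) := by
  have hp0 : 0 < p := by linarith
  have hN : (0 : ℝ) ≤ N := N.cast_nonneg
  have hS : 0 ≤ ∑ i, ∑ j, |U i j| ^ p := by positivity
  have hroot : ((N : ℝ) ^ (2 - p / 2)) ^ (1 / p) = (N : ℝ) ^ (2 / p - 1 / 2) := by
    rw [← Real.rpow_mul hN]
    congr 1
    field_simp
  have heq : (∑ i, ∑ j, |U i j| ^ p) ^ (1 / p) = (N : ℝ) ^ (2 / p - 1 / 2) ↔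
      ∀ i j, |U i j| = 1 / Real.sqrt N := by
    have h := sum_sum_abs_rpow_eq_iff_of_mul_transpose_eq_one hU hp0 hp2
    rw [Fintype.card_fin] at h
    rw [← hroot, Real.rpow_left_inj hS (by positivity) (by positivity), h]
    simp only [Real.sq_eq_inv_iff_abs_eq_one_div_sqrt (Nat.cast_nonneg _)]
  have hHad : _root_.IsHadamard (Real.sqrt N • U) ↔ ∀ i j, |U i j| = 1 / Real.sqrt N := by
    rcases N.eq_zero_or_pos with rfl | hNpos
    · simp [_root_.IsHadamard]
    rw [isHadamard_smul_iff (hU ▸ isDiag_one) (by positivity),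
      abs_of_nonneg (Real.sqrt_nonneg _)]
  refine ⟨?_, heq, heq.trans hHad.symm⟩
  rw [← hroot]
  have hle := sum_sum_abs_rpow_le_of_mul_transpose_eq_one hU hp0.le hp2.le
  rw [Fintype.card_fin] at hle
  exact Real.rpow_le_rpow hS hle (by positivity)
end
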